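/- Let (A, λ) be a finitely additive measure structure on Ω, S a topological space and X : Ω → ℝ with X ≥ 0. Suppose X is λ-tight (for every ε > 0 there is a compact subset K ⊆ ℝ with λ*(X ∉ K) < ε) and the set {t > 0 : {X > t} ∈ A(λ)} is dense in (0, ∞), where A(λ) = {E ⊆ Ω : λ*(E) = λ_*(E) < ∞}. Then X is λ-measurable. -/

import Mathlib

open scoped ENNReal
open MeasureTheory Filter

namespace FA

variable {Ω : Type*}

/-- Outer measure induced by a finitely additive set function on a ring. -/
noncomputable def outer (𝒜 : Set (Set Ω)) (l : Set Ω → ℝ) (E : Set Ω) : ℝ≥0∞ :=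
  ⨅ (A : Set Ω) (_ : A ∈ 𝒜) (_ : E ⊆ A), ENNReal.ofReal (l A)

/-- Inner measure induced by a finitely additive set function on a ring. -/
noncomputable def inner (𝒜 : Set (Set Ω)) (l : Set Ω → ℝ) (E : Set Ω) : ℝ≥0∞ :=
  ⨆ (B : Set Ω) (_ : B ∈ 𝒜) (_ : B ⊆ E), ENNReal.ofReal (l B)

/-- `f` is an `𝒜`-simple function. -/
def IsSimple (𝒜 : Set (Set Ω)) (f : Ω → ℝ) : Prop :=
  ∃ (s : Finset (Set Ω)) (c : Set Ω → ℝ), (∀ A ∈ s, A ∈ 𝒜) ∧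
    ∀ ω, f ω = ∑ A ∈ s, c A * (A.indicator (fun _ => (1 : ℝ)) ω)

/-- `I` is the elementary integral of the `𝒜`-simple function `f` with respect to `l`. -/
def SimpleIntegralEq (𝒜 : Set (Set Ω)) (l : Set Ω → ℝ) (f : Ω → ℝ) (I : ℝ) : Prop :=
  ∃ (s : Finset (Set Ω)) (c : Set Ω → ℝ), (∀ A ∈ s, A ∈ 𝒜) ∧
    (∀ ω, f ω = ∑ A ∈ s, c A * (A.indicator (fun _ => (1 : ℝ)) ω)) ∧
    I = ∑ A ∈ s, c A * l A

/-- `f n` converges to `g` in `l`-measure. -/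
def ConvInMeasure (𝒜 : Set (Set Ω)) (l : Set Ω → ℝ) (f : ℕ → Ω → ℝ) (g : Ω → ℝ) : Prop :=
  ∀ c : ℝ, 0 < c →
    Tendsto (fun n => outer 𝒜 l {ω | c < |f n ω - g ω|}) atTop (nhds 0)

/-- The sequence `f` is Cauchy in the `L¹(l)` seminorm. -/
def CauchyL1 (𝒜 : Set (Set Ω)) (l : Set Ω → ℝ) (f : ℕ → Ω → ℝ) : Prop :=
  ∀ ε : ℝ, 0 < ε → ∃ N : ℕ, ∀ m ≥ N, ∀ n ≥ N,
    ∃ I : ℝ, SimpleIntegralEq 𝒜 l (fun ω => |f m ω - f n ω|) I ∧ I < ε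

/-- `f` is integrable in the finitely additive (Dunford–Schwartz) sense with integral `I`. -/
def HasIntegral (𝒜 : Set (Set Ω)) (l : Set Ω → ℝ) (f : Ω → ℝ) (I : ℝ) : Prop :=
  ∃ (g : ℕ → Ω → ℝ) (J : ℕ → ℝ), (∀ n, IsSimple 𝒜 (g n)) ∧
    ConvInMeasure 𝒜 l g f ∧ CauchyL1 𝒜 l g ∧
    (∀ n, SimpleIntegralEq 𝒜 l (g n) (J n)) ∧ Tendsto J atTop (nhds I)

/-- `f ∈ L¹(l)`. -/
def MemL1 (𝒜 : Set (Set Ω)) (l : Set Ω → ℝ) (f : Ω → ℝ) : Prop :=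
  ∃ I : ℝ, HasIntegral 𝒜 l f I

/-- `f` is `l`-measurable: an `l`-limit in measure of `𝒜`-simple functions. -/
def FAMeasurable (𝒜 : Set (Set Ω)) (l : Set Ω → ℝ) (f : Ω → ℝ) : Prop :=
  ∃ g : ℕ → Ω → ℝ, (∀ n, IsSimple 𝒜 (g n)) ∧ ConvInMeasure 𝒜 l g f

/-- `(𝒜, l)` is a finitely additive measure structure on `Ω`. -/
def FAMeasure (𝒜 : Set (Set Ω)) (l : Set Ω → ℝ) : Prop :=
  MeasureTheory.IsSetRing 𝒜 ∧ (∀ A ∈ 𝒜, 0 ≤ l A) ∧ l ∅ = 0 ∧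
    ∀ A ∈ 𝒜, ∀ B ∈ 𝒜, Disjoint A B → l (A ∪ B) = l A + l B

/-- The ring `𝒜(l)` of sets whose inner and outer measures agree and are finite. -/
def AgreeRing (𝒜 : Set (Set Ω)) (l : Set Ω → ℝ) : Set (Set Ω) :=
  {E : Set Ω | outer 𝒜 l E = inner 𝒜 l E ∧ outer 𝒜 l E < ⊤}

end FA

/-!
Fix `δ, ε > 0`. Tightness puts `X` below some `M` off a set of outer measure `< ε / 2`. Density
gives levels `uᵢ ∈ ((i + 1) δ / 2, (i + 2) δ / 2)`, `i < m`, with `{X > uᵢ} ∈ 𝒜(l)`, and each such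
set contains some `Bᵢ ∈ 𝒜` up to outer measure `ε / (2m)`. Off the union of these exceptional
sets, the simple function `(δ / 2) · #{i | ω ∈ Bᵢ} = (δ / 2) · #{i | uᵢ < X ω}` is within `δ`
of `X ω`.
-/

open FA MeasureTheory
open scoped Finset

namespace FA

variable {Ω : Type*} {𝒜 : Set (Set Ω)} {l : Set Ω → ℝ}

lemma FAMeasure.apply_diff (hl : FAMeasure 𝒜 l) {A B : Set Ω} (hA : A ∈ 𝒜) (hB : B ∈ 𝒜)
    (hBA : B ⊆ A) : l (A \ B) = l A - l B := by
  have h := hl.2.2.2 B hB (A \ B) (hl.1.sdiff_mem hA hB) disjoint_sdiff_self_right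
  rw [Set.union_sdiff_cancel hBA] at h
  linarith

lemma FAMeasure.mono (hl : FAMeasure 𝒜 l) {A B : Set Ω} (hA : A ∈ 𝒜) (hB : B ∈ 𝒜)
    (hBA : B ⊆ A) : l B ≤ l A := by
  linarith [hl.apply_diff hA hB hBA, hl.2.1 (A \ B) (hl.1.sdiff_mem hA hB)]

lemma FAMeasure.union_le (hl : FAMeasure 𝒜 l) {A B : Set Ω} (hA : A ∈ 𝒜) (hB : B ∈ 𝒜) :
    l (A ∪ B) ≤ l A + l B := by
  rw [← Set.union_sdiff_self, hl.2.2.2 A hA (B \ A) (hl.1.sdiff_mem hB hA)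
    disjoint_sdiff_self_right]
  linarith [hl.mono hB (hl.1.sdiff_mem hB hA) Set.sdiff_subset]

lemma outer_le_of_subset {A E : Set Ω} (hA : A ∈ 𝒜) (hE : E ⊆ A) :
    outer 𝒜 l E ≤ ENNReal.ofReal (l A) :=
  iInf₂_le_of_le A hA (iInf_le_of_le hE le_rfl)

lemma outer_mono {E F : Set Ω} (h : E ⊆ F) : outer 𝒜 l E ≤ outer 𝒜 l F :=
  le_iInf₂ fun _ hA => le_iInf fun hFA => outer_le_of_subset hA (h.trans hFA)

lemma outer_empty (hl : FAMeasure 𝒜 l) : outer 𝒜 l (∅ : Set Ω) = 0 :=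
  nonpos_iff_eq_zero.1 <| by
    simpa [hl.2.2.1] using outer_le_of_subset (l := l) hl.1.empty_mem subset_rfl

lemma exists_mem_superset_lt_outer_add {E : Set Ω} {ε : ℝ≥0∞} (hE : outer 𝒜 l E ≠ ⊤)
    (hε : ε ≠ 0) : ∃ A ∈ 𝒜, E ⊆ A ∧ ENNReal.ofReal (l A) < outer 𝒜 l E + ε := by
  obtain ⟨A, hA⟩ := iInf_lt_iff.1 (ENNReal.lt_add_right hE hε)
  obtain ⟨hA, hA'⟩ := iInf_lt_iff.1 hA
  obtain ⟨hEA, hlt⟩ := iInf_lt_iff.1 hA'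
  exact ⟨A, hA, hEA, hlt⟩

lemma exists_mem_subset_inner_lt_add (hl : FAMeasure 𝒜 l) {E : Set Ω} {ε : ℝ≥0∞}
    (hE : inner 𝒜 l E ≠ ⊤) (hε : ε ≠ 0) :
    ∃ B ∈ 𝒜, B ⊆ E ∧ inner 𝒜 l E < ENNReal.ofReal (l B) + ε := by
  rcases eq_or_ne (inner 𝒜 l E) 0 with h0 | h0
  · exact ⟨∅, hl.1.empty_mem, Set.empty_subset E, by simp [h0, hl.2.2.1, pos_iff_ne_zero, hε]⟩
  obtain ⟨B, hB⟩ := lt_iSup_iff.1 (ENNReal.sub_lt_self hE h0 hε)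
  obtain ⟨hB, hB'⟩ := lt_iSup_iff.1 hB
  obtain ⟨hBE, hlt⟩ := lt_iSup_iff.1 hB'
  exact ⟨B, hB, hBE, ENNReal.lt_add_of_sub_lt_right (Or.inl hE) hlt⟩

lemma outer_union_le (hl : FAMeasure 𝒜 l) (E F : Set Ω) :
    outer 𝒜 l (E ∪ F) ≤ outer 𝒜 l E + outer 𝒜 l F := by
  refine ENNReal.le_of_forall_pos_le_add fun ε hε hfin => ?_
  have hε2 : (ε : ℝ≥0∞) / 2 ≠ 0 := by simpa using hε.ne'
  obtain ⟨A, hA, hEA, hlA⟩ := exists_mem_superset_lt_outer_add (ENNReal.add_lt_top.1 hfin).1.ne hε2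
  obtain ⟨B, hB, hFB, hlB⟩ := exists_mem_superset_lt_outer_add (ENNReal.add_lt_top.1 hfin).2.ne hε2
  calc outer 𝒜 l (E ∪ F) ≤ ENNReal.ofReal (l (A ∪ B)) :=
        outer_le_of_subset (hl.1.union_mem hA hB) (Set.union_subset_union hEA hFB)
    _ ≤ ENNReal.ofReal (l A) + ENNReal.ofReal (l B) :=
        (ENNReal.ofReal_le_ofReal (hl.union_le hA hB)).trans ENNReal.ofReal_add_le
    _ ≤ outer 𝒜 l E + ε / 2 + (outer 𝒜 l F + ε / 2) := add_le_add hlA.le hlB.le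
    _ = outer 𝒜 l E + outer 𝒜 l F + ε := by rw [add_add_add_comm, ENNReal.add_halves]

lemma outer_biUnion_le (hl : FAMeasure 𝒜 l) {ι : Type*} (s : Finset ι) (E : ι → Set Ω) :
    outer 𝒜 l (⋃ i ∈ s, E i) ≤ ∑ i ∈ s, outer 𝒜 l (E i) := by
  classical
  induction s using Finset.induction_on with
  | empty => simp [outer_empty hl]
  | insert a s ha ih =>
    rw [Finset.set_biUnion_insert, Finset.sum_insert ha]
    exact (outer_union_le hl _ _).trans (add_le_add le_rfl ih)

lemma exists_mem_subset_outer_diff_lt (hl : FAMeasure 𝒜 l) {E : Set Ω}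
    (hE : E ∈ AgreeRing 𝒜 l) {ε : ℝ≥0∞} (hε : ε ≠ 0) :
    ∃ B ∈ 𝒜, B ⊆ E ∧ outer 𝒜 l (E \ B) < ε := by
  have hε2 : ε / 2 ≠ 0 := by simpa using hε
  obtain ⟨A, hA, hEA, hlA⟩ := exists_mem_superset_lt_outer_add hE.2.ne hε2
  obtain ⟨B, hB, hBE, hlB⟩ := exists_mem_subset_inner_lt_add hl (hE.1 ▸ hE.2.ne) hε2
  refine ⟨B, hB, hBE, ?_⟩
  have hlAB : ENNReal.ofReal (l A) < ε + ENNReal.ofReal (l B) :=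
    calc ENNReal.ofReal (l A) < outer 𝒜 l E + ε / 2 := hlA
      _ ≤ ENNReal.ofReal (l B) + ε / 2 + ε / 2 := by rw [hE.1]; exact add_le_add hlB.le le_rfl
      _ = ε + ENNReal.ofReal (l B) := by rw [add_assoc, ENNReal.add_halves, add_comm]
  calc outer 𝒜 l (E \ B) ≤ ENNReal.ofReal (l (A \ B)) :=
        outer_le_of_subset (hl.1.sdiff_mem hA hB) (Set.sdiff_subset_sdiff_left hEA)
    _ = ENNReal.ofReal (l A) - ENNReal.ofReal (l B) := by
        rw [hl.apply_diff hA hB (hBE.trans hEA), ENNReal.ofReal_sub _ (hl.2.1 B hB)]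
    _ < ε := ENNReal.sub_lt_of_lt_add
        (ENNReal.ofReal_le_ofReal (hl.mono hA hB (hBE.trans hEA))) hlAB

lemma isSimple_sum_indicator {ι : Type*} (s : Finset ι) (c : ι → ℝ) {B : ι → Set Ω}
    (hB : ∀ i ∈ s, B i ∈ 𝒜) :
    IsSimple 𝒜 (fun ω => ∑ i ∈ s, c i * (B i).indicator (fun _ => (1 : ℝ)) ω) := by
  classical
  refine ⟨s.image B, fun A => ∑ i ∈ s with B i = A, c i, by simpa using hB, fun ω => ?_⟩
  dsimp only
  rw [← Finset.sum_fiberwise_of_maps_to (fun i hi => Finset.mem_image_of_mem B hi)]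
  refine Finset.sum_congr rfl fun A _ => ?_
  rw [Finset.sum_mul]
  exact Finset.sum_congr rfl fun i hi => by rw [(Finset.mem_filter.1 hi).2]

lemma abs_card_filter_mul_sub_lt {h x : ℝ} {m : ℕ} {u : ℕ → ℝ} (hh : 0 < h) (hx : 0 ≤ x)
    (hxm : x ≤ m * h) (hu : ∀ i : ℕ, (i + 1) * h < u i ∧ u i < (i + 2) * h) :
    |#{i ∈ Finset.range m | u i < x} * h - x| < 2 * h := by
  set k := ⌊x / h⌋₊
  have hkx : k * h ≤ x := (le_div_iff₀ hh).1 (Nat.floor_le (div_nonneg hx hh.le))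
  have hxk : x < (k + 1) * h := (div_lt_iff₀ hh).1 (Nat.lt_floor_add_one _)
  have hkm : k ≤ m := Nat.floor_le_of_le ((div_le_iff₀ hh).2 hxm)
  have hle : #{i ∈ Finset.range m | u i < x} ≤ k := by
    refine (Finset.card_le_card fun i hi => ?_).trans (Finset.card_range k).le
    have hi : (i + 1) * h < (k + 1) * h := ((hu i).1.trans (Finset.mem_filter.1 hi).2).trans hxk
    exact Finset.mem_range.2
      (by exact_mod_cast lt_of_add_lt_add_right (lt_of_mul_lt_mul_right hi hh.le))
  have hge : k - 1 ≤ #{i ∈ Finset.range m | u i < x} := by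
    rw [← Finset.card_range (k - 1)]
    refine Finset.card_le_card fun i hi => ?_
    have hik : i + 2 ≤ k := by have := Finset.mem_range.1 hi; omega
    refine Finset.mem_filter.2 ⟨Finset.mem_range.2 (by omega), (hu i).2.trans_le ?_⟩
    exact (mul_le_mul_of_nonneg_right (by exact_mod_cast hik) hh.le).trans hkx
  have hle' : (#{i ∈ Finset.range m | u i < x} : ℝ) * h ≤ k * h :=
    mul_le_mul_of_nonneg_right (by exact_mod_cast hle) hh.le
  have hge' : (k + 1 : ℝ) * h ≤ (#{i ∈ Finset.range m | u i < x} + 2) * h :=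
    mul_le_mul_of_nonneg_right (by norm_cast; omega) hh.le
  rw [abs_sub_lt_iff]
  constructor <;> linarith

lemma exists_isSimple_outer_lt_abs_sub_le_of_tight (hl : FAMeasure 𝒜 l) {X : Ω → ℝ}
    (hX : ∀ ω, 0 ≤ X ω)
    (htight : ∀ ε : ℝ≥0∞, 0 < ε → ∃ K : Set ℝ, IsCompact K ∧
      outer 𝒜 l {ω | X ω ∉ K} < ε)
    (hdense : ∀ a b : ℝ, 0 < a → a < b →
      ∃ t : ℝ, a < t ∧ t < b ∧ {ω | t < X ω} ∈ AgreeRing 𝒜 l)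
    {δ : ℝ} (hδ : 0 < δ) {ε : ℝ≥0∞} (hε : ε ≠ 0) :
    ∃ f : Ω → ℝ, IsSimple 𝒜 f ∧ outer 𝒜 l {ω | δ < |f ω - X ω|} ≤ ε := by
  classical
  obtain ⟨K, hK, hKout⟩ := htight (ε / 2) (ENNReal.half_pos hε)
  obtain ⟨M, hM⟩ := hK.bddAbove
  set h := δ / 2 with h_def
  have hh : 0 < h := half_pos hδ
  set m := ⌈M / h⌉₊ + 1
  have hMm : M ≤ m * h := by
    rw [← div_le_iff₀ hh]
    exact (Nat.le_ceil _).trans (by simp [m])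
  choose u hu hu' hE using fun i : ℕ =>
    hdense ((i + 1) * h) ((i + 2) * h) (by positivity) (by linarith)
  have hεm : ε / 2 / m ≠ 0 := by simp [hε]
  choose B hB hBE hBout using fun i => exists_mem_subset_outer_diff_lt hl (hE i) hεm
  set f := fun ω => ∑ i ∈ Finset.range m, h * (B i).indicator (fun _ => (1 : ℝ)) ω
  refine ⟨f, isSimple_sum_indicator _ _ fun i _ => hB i, ?_⟩
  have hbad : {ω | δ < |f ω - X ω|} ⊆
      {ω | X ω ∉ K} ∪ ⋃ i ∈ Finset.range m, {ω | u i < X ω} \ B i := by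
    intro ω hω
    by_contra hgood
    simp only [Set.mem_union, Set.mem_ofPred_eq, Set.mem_iUnion, Set.mem_sdiff,
      Finset.mem_range, not_or, not_exists, not_and, not_not] at hgood
    obtain ⟨hωK, hωB⟩ := hgood
    have hfω : f ω = #{i ∈ Finset.range m | u i < X ω} * h := by
      rw [Finset.filter_congr fun i hi => ⟨hωB i (Finset.mem_range.1 hi), @hBE i ω⟩]
      simp [f, Set.indicator_apply, Finset.sum_ite, mul_comm]
    have hlt := abs_card_filter_mul_sub_lt hh (hX ω) ((hM hωK).trans hMm)
      fun i => ⟨hu i, hu' i⟩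
    rw [Set.mem_ofPred_eq, hfω] at hω
    linarith
  calc outer 𝒜 l {ω | δ < |f ω - X ω|}
      ≤ outer 𝒜 l {ω | X ω ∉ K} +
          ∑ i ∈ Finset.range m, outer 𝒜 l ({ω | u i < X ω} \ B i) :=
        ((outer_mono hbad).trans (outer_union_le hl _ _)).trans
          (add_le_add le_rfl (outer_biUnion_le hl _ _))
    _ ≤ ε / 2 + ∑ _i ∈ Finset.range m, ε / 2 / m :=
        add_le_add hKout.le (Finset.sum_le_sum fun i _ => (hBout i).le)
    _ = ε := by
        rw [Finset.sum_const, Finset.card_range, nsmul_eq_mul,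
          ENNReal.mul_div_cancel (by simp [m]) (ENNReal.natCast_ne_top m), ENNReal.add_halves]

lemma faMeasurable_of_forall_exists_isSimple {X : Ω → ℝ}
    (h : ∀ δ : ℝ, 0 < δ → ∃ f : Ω → ℝ, IsSimple 𝒜 f ∧
      outer 𝒜 l {ω | δ < |f ω - X ω|} ≤ ENNReal.ofReal δ) :
    FAMeasurable 𝒜 l X := by
  choose g hg hgX using fun n : ℕ => h (1 / (n + 1)) Nat.one_div_pos_of_nat
  refine ⟨g, hg, fun c hc => ?_⟩
  have hlim : Tendsto (fun n : ℕ => ENNReal.ofReal (1 / (n + 1))) atTop (nhds 0) :=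
    ENNReal.ofReal_zero ▸ ENNReal.tendsto_ofReal tendsto_one_div_add_atTop_nhds_zero_nat
  obtain ⟨N, hN⟩ := exists_nat_one_div_lt hc
  refine tendsto_of_tendsto_of_tendsto_of_le_of_le' tendsto_const_nhds hlim
    (Eventually.of_forall fun _ => zero_le) ?_
  filter_upwards [eventually_ge_atTop N] with n hn
  refine (outer_mono fun ω (hω : c < _) => ?_).trans (hgX n)
  have hnN : 1 / ((n : ℝ) + 1) ≤ 1 / (N + 1) := by gcongr
  exact (hnN.trans_lt hN).trans hω

end FA

/-- if `X ≥ 0` is `l`-tight and `{t > 0 : {X > t} ∈ 𝒜(l)}` is dense in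
`(0, ∞)`, then `X` is `l`-measurable. -/
theorem stmt2 {Ω : Type*} (𝒜 : Set (Set Ω)) (l : Set Ω → ℝ)
    (hl : FAMeasure 𝒜 l) (X : Ω → ℝ) (hX : ∀ ω, 0 ≤ X ω)
    (htight : ∀ ε : ℝ≥0∞, 0 < ε → ∃ K : Set ℝ, IsCompact K ∧
      outer 𝒜 l {ω | X ω ∉ K} < ε)
    (hdense : ∀ a b : ℝ, 0 < a → a < b →
      ∃ t : ℝ, a < t ∧ t < b ∧ {ω | t < X ω} ∈ AgreeRing 𝒜 l) :
    FAMeasurable 𝒜 l X :=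
  faMeasurable_of_forall_exists_isSimple fun _ hδ =>
    exists_isSimple_outer_lt_abs_sub_le_of_tight hl hX htight hdense hδ
      (ENNReal.ofReal_pos.2 hδ).ne'
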